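/- Contractions are dense among nonexpansive mappings: for every nonexpansive map T : X → X and every ε > 0 there exist l ∈ [0, 1) and a map T₁ : X → X that is a contraction with modulus l and satisfies ρ(T, T₁) < ε. -/

import Mathlib

/-!
Shrinking a nonexpansive map toward the origin, `T₁ := (1 - δ) • T`, gives a contraction with
modulus `1 - δ`. Since `T` has at most linear growth, `‖T x - T₁ x‖ = δ ‖T x‖ ≤ δ (‖T 0‖ + 1) n`
on the ball of radius `n ≥ 1`, and `∑ (n + 1) / 2 ^ (n + 1) = 2` turns this into
`ρ(T, T₁) ≤ 2 δ (‖T 0‖ + 1)`, which is small for small `δ`.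
-/

open RealInnerProductSpace Filter

variable {X : Type*} [NormedAddCommGroup X] [InnerProductSpace ℝ X] [CompleteSpace X]

/-- `T` is nonexpansive. -/
def Nonexpansive (T : X → X) : Prop := ∀ x y : X, ‖T x - T y‖ ≤ ‖x - y‖

/-- `T` is firmly nonexpansive. -/
def FirmlyNonexpansive (T : X → X) : Prop :=
  ∀ x y : X, ‖T x - T y‖ ^ 2 ≤ ⟪x - y, T x - T y⟫

/-- `‖T₁ - T₂‖ₙ = sup_{‖x‖ ≤ n} ‖T₁ x - T₂ x‖`. -/
noncomputable def ballSup (T₁ T₂ : X → X) (n : ℕ) : ℝ :=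
  sSup {r : ℝ | ∃ x : X, ‖x‖ ≤ (n : ℝ) ∧ r = ‖T₁ x - T₂ x‖}

/-- The metric `ρ` on nonexpansive maps. -/
noncomputable def rho (T₁ T₂ : X → X) : ℝ :=
  ∑' n : ℕ, (1 / 2 ^ (n + 1)) *
    (ballSup T₁ T₂ (n + 1) / (1 + ballSup T₁ T₂ (n + 1)))

/-- The metric `ρ̂` on firmly nonexpansive maps: `ρ̂(T₁,T₂) = ρ(2T₁ - Id, 2T₂ - Id)`. -/
noncomputable def rhoHat (T₁ T₂ : X → X) : ℝ :=
  rho (fun x => (2 : ℝ) • T₁ x - x) (fun x => (2 : ℝ) • T₂ x - x)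

/-- `T` is super-regular with limit point `xT`. -/
def SuperRegularAt (T : X → X) (xT : X) : Prop :=
  ∀ s : ℝ, 0 < s → ∀ ε : ℝ, 0 < ε → ∃ N : ℕ, ∀ n ≥ N, ∀ x : X, ‖x‖ ≤ s → ‖T^[n] x - xT‖ < ε

/-- `T` is super-regular. -/
def SuperRegular (T : X → X) : Prop := ∃ xT : X, SuperRegularAt T xT

/-- `T` is a (Banach) contraction. -/
def Contraction (T : X → X) : Prop :=
  ∃ l : ℝ, 0 ≤ l ∧ l < 1 ∧ ∀ x y : X, ‖T x - T y‖ ≤ l * ‖x - y‖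

theorem hasSum_succ_div_two_pow_succ :
    HasSum (fun n : ℕ => ((n : ℝ) + 1) / 2 ^ (n + 1)) 2 := by
  have hmul : HasSum (fun n : ℕ => (n : ℝ) * (1 / 2) ^ n) 2 := by
    have := hasSum_coe_mul_geometric_of_norm_lt_one (r := (1 / 2 : ℝ)) (by norm_num)
    norm_num at this ⊢
    exact this
  have hsum := (hmul.add hasSum_geometric_two).div_const 2
  norm_num at hsum
  refine hsum.congr_fun fun n => ?_
  rw [pow_succ, one_div, inv_pow]
  field_simp

section

variable {E : Type*} [NormedAddCommGroup E]

theorem ballSup_nonneg (T₁ T₂ : E → E) (n : ℕ) : 0 ≤ ballSup T₁ T₂ n :=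
  Real.sSup_nonneg (by rintro _ ⟨x, -, rfl⟩; exact norm_nonneg _)

theorem ballSup_le {T₁ T₂ : E → E} {n : ℕ} {C : ℝ} (hC : 0 ≤ C)
    (h : ∀ x : E, ‖x‖ ≤ n → ‖T₁ x - T₂ x‖ ≤ C) : ballSup T₁ T₂ n ≤ C :=
  Real.sSup_le (by rintro _ ⟨x, hx, rfl⟩; exact h x hx) hC

theorem rho_le_of_ballSup_le {T₁ T₂ : E → E} {K : ℝ}
    (h : ∀ n : ℕ, ballSup T₁ T₂ (n + 1) ≤ K * (n + 1)) : rho T₁ T₂ ≤ 2 * K := by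
  have hterm : ∀ n : ℕ, 1 / 2 ^ (n + 1) * (ballSup T₁ T₂ (n + 1) / (1 + ballSup T₁ T₂ (n + 1)))
      ≤ K * (((n : ℝ) + 1) / 2 ^ (n + 1)) := by
    intro n
    have hb := ballSup_nonneg T₁ T₂ (n + 1)
    calc 1 / 2 ^ (n + 1) * (ballSup T₁ T₂ (n + 1) / (1 + ballSup T₁ T₂ (n + 1)))
        ≤ 1 / 2 ^ (n + 1) * ballSup T₁ T₂ (n + 1) := by
          gcongr
          exact div_le_self hb (le_add_of_nonneg_right hb)
      _ ≤ 1 / 2 ^ (n + 1) * (K * (n + 1)) := by gcongr; exact_mod_cast h n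
      _ = K * (((n : ℝ) + 1) / 2 ^ (n + 1)) := by ring
  have hsum := hasSum_succ_div_two_pow_succ.mul_left K
  have hnonneg : ∀ n : ℕ, 0 ≤ 1 / 2 ^ (n + 1) *
      (ballSup T₁ T₂ (n + 1) / (1 + ballSup T₁ T₂ (n + 1))) := fun n => by
    have := ballSup_nonneg T₁ T₂ (n + 1)
    positivity
  rw [mul_comm 2 K, ← hsum.tsum_eq]
  exact (Summable.of_nonneg_of_le hnonneg hterm hsum.summable).tsum_le_tsum hterm hsum.summable

namespace Nonexpansive

variable {T : E → E}

theorem norm_le (hT : Nonexpansive T) (x : E) : ‖T x‖ ≤ ‖x‖ + ‖T 0‖ := by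
  simpa [sub_zero] using norm_le_norm_sub_add (T x) (T 0) |>.trans (add_le_add_left (hT x 0) _)

variable [NormedSpace ℝ E]

theorem norm_smul_sub_smul_le (hT : Nonexpansive T) {c : ℝ} (hc : 0 ≤ c) (x y : E) :
    ‖c • T x - c • T y‖ ≤ c * ‖x - y‖ := by
  rw [← smul_sub, norm_smul, Real.norm_of_nonneg hc]
  exact mul_le_mul_of_nonneg_left (hT x y) hc

theorem ballSup_smul_le (hT : Nonexpansive T) {δ : ℝ} (hδ : 0 ≤ δ) (n : ℕ) :
    ballSup T (fun x => (1 - δ) • T x) (n + 1) ≤ δ * (‖T 0‖ + 1) * (n + 1) := by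
  refine ballSup_le (by positivity) fun x hx => ?_
  push_cast at hx
  have hn : (1 : ℝ) ≤ n + 1 := le_add_of_nonneg_left n.cast_nonneg
  calc ‖T x - (1 - δ) • T x‖ = δ * ‖T x‖ := by
        rw [sub_smul, one_smul, sub_sub_cancel, norm_smul, Real.norm_of_nonneg hδ]
    _ ≤ δ * ((n + 1) + ‖T 0‖) := by gcongr; exact (hT.norm_le x).trans (by linarith)
    _ ≤ δ * (‖T 0‖ + 1) * (n + 1) := by
        rw [mul_assoc]
        gcongr
        nlinarith [norm_nonneg (T 0)]

theorem rho_smul_le (hT : Nonexpansive T) {δ : ℝ} (hδ : 0 ≤ δ) :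
    rho T (fun x => (1 - δ) • T x) ≤ 2 * (δ * (‖T 0‖ + 1)) :=
  rho_le_of_ballSup_le (hT.ballSup_smul_le hδ)

end Nonexpansive

end

/-- contractions are `ρ`-dense in `N(X)`. -/
theorem contractions_dense (T : X → X) (hT : Nonexpansive T) (ε : ℝ) (hε : 0 < ε) :
    ∃ (l : ℝ) (T₁ : X → X), 0 ≤ l ∧ l < 1 ∧
      (∀ x y : X, ‖T₁ x - T₁ y‖ ≤ l * ‖x - y‖) ∧ rho T T₁ < ε := by
  set c := ‖T 0‖ + 1
  have hc : 0 < c := by positivity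
  set δ := min 1 (ε / (4 * c))
  have hδ : 0 < δ := lt_min one_pos (by positivity)
  have hδ1 : δ ≤ 1 := min_le_left _ _
  have hδc : δ * c ≤ ε / 4 :=
    calc δ * c ≤ ε / (4 * c) * c := by gcongr; exact min_le_right _ _
      _ = ε / 4 := by field_simp
  refine ⟨1 - δ, fun x => (1 - δ) • T x, by linarith, by linarith,
    hT.norm_smul_sub_smul_le (by linarith), ?_⟩
  calc rho T (fun x => (1 - δ) • T x) ≤ 2 * (δ * c) := hT.rho_smul_le hδ.le
    _ < ε := by linarith
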